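/- arXiv:math/0411480 — 6 statements merged into one kernel-verified Lean document; each statement's English description precedes it below -/
import Mathlib

section
/- Let F be a holomorphic map from the punctured unit disc Δ* to SL(2,ℂ) with a pole of order n ≥ 1 at 0. Then there exist a matrix A ∈ SL(2,ℂ), a matrix B ∈ SU(2), and holomorphic functions a,b,c,d : Δ → ℂ such that for all z ∈ Δ*, A·F(z)·B = z^(−n)·(a(z), b(z); c(z), d(z)), and moreover a(0) = a'(0) = b(0) = c(0) = 0 and d(0) ≠ 0. -/
/-!
STATEMENT 0: Normal form at a pole of a holomorphic map `F : Δ* → SL(2,ℂ)`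
with a pole of order `n ≥ 1` at `0`.
-/

attribute [local instance] Matrix.normedAddCommGroup Matrix.normedSpace

open Metric Matrix

/-- The open unit disc in `ℂ`. -/
noncomputable def Disc : Set ℂ := Metric.ball (0 : ℂ) 1

/-- The punctured open unit disc in `ℂ`. -/
noncomputable def PDisc : Set ℂ := Metric.ball (0 : ℂ) 1 \ {0}

/-!
Put `G z = zⁿ • F z`, holomorphic on the disc. Its determinant is `z ^ (2n)` off `0`, hence
near `0` by continuity, so the nonzero matrix `G 0` is singular. Completing a unit vector of its
kernel to a matrix `B ∈ SU(2)` kills the first column of `G 0 * B`, and some `A ∈ SL(2,ℂ)` moves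
the other (nonzero) column to `(0, 1)`, so `A * G 0 * B = (0, 0; 0, 1)`. The entries of
`A * G z * B` then satisfy `a d - b c = z ^ (2n)` near `0` with `2n ≥ 2`; differentiating at `0`
gives `a'(0) d(0) = 0`, i.e. `a'(0) = 0`.
-/

open Filter Topology

namespace Matrix

variable {ι : Type*} [Fintype ι] [DecidableEq ι]

theorem exists_star_dotProduct_self_eq_one_and_mulVec_eq_zero {M : Matrix ι ι ℂ} (h : M.det = 0) :
    ∃ v : ι → ℂ, star v ⬝ᵥ v = 1 ∧ M *ᵥ v = 0 := by
  obtain ⟨v, hv, hMv⟩ := exists_mulVec_eq_zero_iff.mpr h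
  set x : EuclideanSpace ℂ ι := WithLp.toLp 2 v
  have hx : x ≠ 0 := by simpa [x] using hv
  refine ⟨(‖x‖ : ℂ)⁻¹ • v, ?_, by rw [mulVec_smul, hMv, smul_zero]⟩
  calc star ((‖x‖ : ℂ)⁻¹ • v) ⬝ᵥ ((‖x‖ : ℂ)⁻¹ • v)
      = inner ℂ ((‖x‖ : ℂ)⁻¹ • x) ((‖x‖ : ℂ)⁻¹ • x) := dotProduct_comm _ _
    _ = 1 := by simp [inner_self_eq_norm_sq_to_K, norm_smul, hx]

def specialUnitaryOfColumn (v : Fin 2 → ℂ) : Matrix (Fin 2) (Fin 2) ℂ :=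
  of ![![v 0, -star (v 1)], ![v 1, star (v 0)]]

theorem specialUnitaryOfColumn_mem_specialUnitaryGroup {v : Fin 2 → ℂ} (hv : star v ⬝ᵥ v = 1) :
    specialUnitaryOfColumn v ∈ specialUnitaryGroup (Fin 2) ℂ := by
  rw [mem_specialUnitaryGroup_iff, mem_unitaryGroup_iff]
  constructor
  · ext i j
    fin_cases i <;> fin_cases j <;>
      simp [specialUnitaryOfColumn, mul_apply, Fin.sum_univ_two, dotProduct] at hv ⊢ <;>
      ring_nf at hv ⊢ <;> exact hv
  · simp [specialUnitaryOfColumn, det_fin_two_of, dotProduct, Fin.sum_univ_two] at hv ⊢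
    linear_combination hv

theorem mul_specialUnitaryOfColumn_apply_zero (M : Matrix (Fin 2) (Fin 2) ℂ) (v : Fin 2 → ℂ)
    (i : Fin 2) :
    (M * specialUnitaryOfColumn v) i 0 = (M *ᵥ v) i := by
  simp [specialUnitaryOfColumn, mul_apply, mulVec, dotProduct, Fin.sum_univ_two]

theorem exists_det_eq_one_mulVec_eq {K : Type*} [Field K] {w : Fin 2 → K} (hw : w ≠ 0) :
    ∃ A : Matrix (Fin 2) (Fin 2) K, A.det = 1 ∧ A *ᵥ w = ![0, 1] := by
  by_cases h0 : w 0 = 0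
  · have h1 : w 1 ≠ 0 := fun h1 => hw (by ext i; fin_cases i <;> assumption)
    refine ⟨!![w 1, 0; 0, (w 1)⁻¹], by simp [det_fin_two_of, h1], ?_⟩
    ext i; fin_cases i <;> simp [mulVec, dotProduct, Fin.sum_univ_two, h0, h1]
  · refine ⟨!![w 1, -w 0; (w 0)⁻¹, 0], by simp [det_fin_two_of, h0], ?_⟩
    ext i; fin_cases i <;> simp [mulVec, dotProduct, Fin.sum_univ_two, h0, mul_comm]

theorem exists_mul_mul_eq_of_det_eq_zero {M : Matrix (Fin 2) (Fin 2) ℂ} (hM : M ≠ 0)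
    (hdet : M.det = 0) :
    ∃ A B : Matrix (Fin 2) (Fin 2) ℂ, A.det = 1 ∧ B ∈ specialUnitaryGroup (Fin 2) ℂ ∧
      A * M * B = !![0, 0; 0, 1] := by
  obtain ⟨v, hv, hMv⟩ := exists_star_dotProduct_self_eq_one_and_mulVec_eq_zero hdet
  have hB := specialUnitaryOfColumn_mem_specialUnitaryGroup hv
  have hcol₀ (i : Fin 2) : (M * specialUnitaryOfColumn v) i 0 = 0 := by
    rw [mul_specialUnitaryOfColumn_apply_zero, hMv, Pi.zero_apply]
  have hcol₁ : (fun i => (M * specialUnitaryOfColumn v) i 1) ≠ 0 := by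
    intro hcol₁
    have hMB : M * specialUnitaryOfColumn v = 0 := by
      ext i j; fin_cases j
      · exact hcol₀ i
      · exact congrFun hcol₁ i
    apply hM
    rw [← mul_one M, ← mem_unitaryGroup_iff.mp (specialUnitaryGroup_le_unitaryGroup hB),
      ← Matrix.mul_assoc, hMB, Matrix.zero_mul]
  obtain ⟨A, hA, hAw⟩ := exists_det_eq_one_mulVec_eq hcol₁
  refine ⟨A, specialUnitaryOfColumn v, hA, hB, ?_⟩
  rw [Matrix.mul_assoc]
  ext i j
  fin_cases j
  · fin_cases i <;> simp [mul_apply, hcol₀]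
  · fin_cases i
    · simpa [mulVec, dotProduct, mul_apply] using congrFun hAw 0
    · simpa [mulVec, dotProduct, mul_apply] using congrFun hAw 1

end Matrix

theorem det_eventuallyEq_pow_of_eventuallyEq_smul {𝕜 ι : Type*} [NontriviallyNormedField 𝕜]
    [Fintype ι] [DecidableEq ι] {n : ℕ} {F G : 𝕜 → Matrix ι ι 𝕜} (hG : ContinuousAt G 0)
    (hGF : ∀ᶠ z in 𝓝[≠] 0, G z = z ^ n • F z) (hF : ∀ᶠ z in 𝓝[≠] 0, (F z).det = 1) :
    (fun z => (G z).det) =ᶠ[𝓝 0] fun z => z ^ (n * Fintype.card ι) := by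
  have hdet : ContinuousAt (fun z => (G z).det) 0 := continuous_id.matrix_det.continuousAt.comp hG
  rw [← hdet.eventuallyEq_nhds_iff_eventuallyEq_nhdsNE (continuous_pow _).continuousAt]
  filter_upwards [hGF, hF] with z hGz hFz
  simp [hGz, hFz, pow_mul]

theorem deriv_eq_zero_of_mul_sub_mul_eventuallyEq_pow {𝕜 : Type*} [NontriviallyNormedField 𝕜]
    {a b c d : 𝕜 → 𝕜} {k : ℕ} (hk : 2 ≤ k) (ha : DifferentiableAt 𝕜 a 0)
    (hb : DifferentiableAt 𝕜 b 0) (hc : DifferentiableAt 𝕜 c 0) (hd : DifferentiableAt 𝕜 d 0)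
    (ha0 : a 0 = 0) (hb0 : b 0 = 0) (hc0 : c 0 = 0) (hd0 : d 0 ≠ 0)
    (h : (fun z => a z * d z - b z * c z) =ᶠ[𝓝 0] fun z => z ^ k) :
    deriv a 0 = 0 := by
  have hderiv := h.deriv_eq
  rw [deriv_fun_sub (ha.fun_mul hd) (hb.fun_mul hc), deriv_fun_mul ha hd, deriv_fun_mul hb hc,
    deriv_pow_field, ha0, hb0, hc0, zero_pow (by omega)] at hderiv
  simpa [hd0] using hderiv

theorem differentiableOn_mul_mul_apply {ι : Type*} [Fintype ι] {s : Set ℂ}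
    {G : ℂ → Matrix ι ι ℂ} (A B : Matrix ι ι ℂ) (hG : DifferentiableOn ℂ G s) (i j : ι) :
    DifferentiableOn ℂ (fun z => (A * G z * B) i j) s := by
  have h : DifferentiableOn ℂ (fun z => A * G z * B) s :=
    ((LinearMap.mulRight ℂ B ∘ₗ LinearMap.mulLeft ℂ A).toContinuousLinearMap.differentiable
      ).comp_differentiableOn hG
  exact differentiableOn_pi.1 (differentiableOn_pi.1 h i) j

theorem normal_form_at_pole_general
    (n : ℕ) (hn : 1 ≤ n)
    (F : ℂ → Matrix (Fin 2) (Fin 2) ℂ)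
    (hF_SL : ∀ z ∈ PDisc, (F z).det = 1)
    -- `F` has a pole of order `n` at `0`: `z ↦ zⁿ • F z` extends holomorphically
    -- to the disc with nonzero value at `0`.
    (hpole : ∃ G : ℂ → Matrix (Fin 2) (Fin 2) ℂ, DifferentiableOn ℂ G Disc ∧
      (∀ z ∈ PDisc, G z = (z ^ n) • F z) ∧ G 0 ≠ 0) :
    ∃ (A B : Matrix (Fin 2) (Fin 2) ℂ), A.det = 1 ∧ B.det = 1 ∧ B ∈ Matrix.unitaryGroup (Fin 2) ℂ ∧
      ∃ a b c d : ℂ → ℂ,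
        DifferentiableOn ℂ a Disc ∧ DifferentiableOn ℂ b Disc ∧
        DifferentiableOn ℂ c Disc ∧ DifferentiableOn ℂ d Disc ∧
        (∀ z ∈ PDisc, A * F z * B = (z ^ n)⁻¹ • !![a z, b z; c z, d z]) ∧
        a 0 = 0 ∧ deriv a 0 = 0 ∧ b 0 = 0 ∧ c 0 = 0 ∧ d 0 ≠ 0 := by
  obtain ⟨G, hG, hGF, hG0⟩ := hpole
  have hDisc : Disc ∈ 𝓝 (0 : ℂ) := ball_mem_nhds 0 one_pos
  have hPDisc : PDisc ∈ 𝓝[≠] (0 : ℂ) := sdiff_mem_nhdsWithin_compl hDisc _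
  have hdet := det_eventuallyEq_pow_of_eventuallyEq_smul (hG.continuousOn.continuousAt hDisc)
    (eventually_of_mem hPDisc hGF) (eventually_of_mem hPDisc hF_SL)
  obtain ⟨A, B, hA, hB, hAGB⟩ :=
    exists_mul_mul_eq_of_det_eq_zero hG0 (by simpa [show n ≠ 0 by omega] using hdet.eq_of_nhds)
  obtain ⟨hBU, hBdet⟩ := mem_specialUnitaryGroup_iff.mp hB
  let e (i j : Fin 2) (z : ℂ) : ℂ := (A * G z * B) i j
  have he (i j : Fin 2) : DifferentiableAt ℂ (e i j) 0 :=
    (differentiableOn_mul_mul_apply A B hG i j).differentiableAt hDisc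
  obtain ⟨ha0, hb0, hc0, hd0⟩ : e 0 0 0 = 0 ∧ e 0 1 0 = 0 ∧ e 1 0 0 = 0 ∧ e 1 1 0 = 1 := by
    simp [e, hAGB]
  refine ⟨A, B, hA, hBdet, hBU, e 0 0, e 0 1, e 1 0, e 1 1,
    differentiableOn_mul_mul_apply A B hG 0 0, differentiableOn_mul_mul_apply A B hG 0 1,
    differentiableOn_mul_mul_apply A B hG 1 0, differentiableOn_mul_mul_apply A B hG 1 1,
    fun z hz => ?_, ha0, ?_, hb0, hc0, hd0 ▸ one_ne_zero⟩
  · have hzn : z ^ n ≠ 0 := pow_ne_zero _ (by simpa using hz.2)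
    rw [← eta_fin_two (A * G z * B), hGF z hz, Matrix.mul_smul, Matrix.smul_mul, smul_smul,
      inv_mul_cancel₀ hzn, one_smul]
  · refine deriv_eq_zero_of_mul_sub_mul_eventuallyEq_pow (k := n * 2) (by omega) (he 0 0)
      (he 0 1) (he 1 0) (he 1 1) ha0 hb0 hc0 (hd0 ▸ one_ne_zero) ?_
    filter_upwards [hdet] with z hz
    simp [e, ← det_fin_two, det_mul, hA, hBdet, hz]

theorem normal_form_at_pole
    (n : ℕ) (hn : 1 ≤ n)
    (F : ℂ → Matrix (Fin 2) (Fin 2) ℂ)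
    (hF_holo : DifferentiableOn ℂ F PDisc)
    (hF_SL : ∀ z ∈ PDisc, (F z).det = 1)
    -- `F` has a pole of order `n` at `0`: `z ↦ zⁿ • F z` extends holomorphically
    -- to the disc with nonzero value at `0`.
    (hpole : ∃ G : ℂ → Matrix (Fin 2) (Fin 2) ℂ, DifferentiableOn ℂ G Disc ∧
      (∀ z ∈ PDisc, G z = (z ^ n) • F z) ∧ G 0 ≠ 0) :
    ∃ (A B : Matrix (Fin 2) (Fin 2) ℂ), A.det = 1 ∧ B.det = 1 ∧ B ∈ Matrix.unitaryGroup (Fin 2) ℂ ∧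
      ∃ a b c d : ℂ → ℂ,
        DifferentiableOn ℂ a Disc ∧ DifferentiableOn ℂ b Disc ∧
        DifferentiableOn ℂ c Disc ∧ DifferentiableOn ℂ d Disc ∧
        (∀ z ∈ PDisc, A * F z * B = (z ^ n)⁻¹ • !![a z, b z; c z, d z]) ∧
        a 0 = 0 ∧ deriv a 0 = 0 ∧ b 0 = 0 ∧ c 0 = 0 ∧ d 0 ≠ 0 :=
  normal_form_at_pole_general n hn F hF_SL hpole
end

section
/- Let n ≥ 1 be an integer and a,b,c,d : Δ → ℂ holomorphic functions with a(z)d(z) − b(z)c(z) = z^(2n) for all z ∈ Δ. If the map F(z) = z^(−n)·(a(z), b(z); c(z), d(z)) satisfies det F'(z) = 0 for all z ∈ Δ*, then a'(z)d'(z) − b'(z)c'(z) = n²·z^(2n−2) for all z ∈ Δ. -/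
/-!
Write `F = z⁻ⁿ M`, so `F' = z⁻ⁿ M' - n z⁻ⁿ⁻¹ M`. For `2 × 2` matrices
`det (s A + t B) = s² det A + s t (mixed term) + t² det B`, and with `A = M'`, `B = M` the mixed term
is `(det M)' = (z²ⁿ)' = 2n z²ⁿ⁻¹`. Multiplying `det F' = 0` by `z²ⁿ⁺²` gives
`z² det M' - 2n² z²ⁿ + n² z²ⁿ = 0` on the punctured disc, and the identity at `0` follows by
continuity of the holomorphic derivatives.
-/

attribute [local instance] Matrix.normedAddCommGroup Matrix.normedSpace

open Metric Matrix

open Filter Topology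

theorem Matrix.det_fin_two_smul_add_smul {R : Type*} [CommRing R] (s t a b c d a' b' c' d' : R) :
    (s • !![a, b; c, d] + t • !![a', b'; c', d']).det =
      s ^ 2 * (a * d - b * c) + s * t * (a * d' + a' * d - b * c' - b' * c)
        + t ^ 2 * (a' * d' - b' * c') := by
  simp only [det_fin_two, add_apply, smul_apply, of_apply, cons_val', cons_val_zero,
    cons_val_one, empty_val', cons_val_fin_one, smul_eq_mul]
  ring

theorem natCast_mul_pow_sub_one_mul {R : Type*} [CommSemiring R] (k : ℕ) (z : R) :
    (k : R) * z ^ (k - 1) * z = k * z ^ k := by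
  rcases k with _ | k
  · simp
  · simp [pow_succ, mul_assoc]

theorem ContinuousAt.eq_of_eventuallyEq_nhdsNE {X Y : Type*} [TopologicalSpace X]
    [TopologicalSpace Y] [T2Space Y] {f g : X → Y} {x : X} [(𝓝[≠] x).NeBot]
    (hf : ContinuousAt f x) (hg : ContinuousAt g x) (h : f =ᶠ[𝓝[≠] x] g) : f x = g x :=
  tendsto_nhds_unique_of_eventuallyEq hf.continuousWithinAt hg.continuousWithinAt h

section Deriv

variable {𝕜 : Type*} [NontriviallyNormedField 𝕜] {a b c d : 𝕜 → 𝕜} {a' b' c' d' z : 𝕜}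

theorem HasDerivAt.matrix_fin_two (ha : HasDerivAt a a' z) (hb : HasDerivAt b b' z)
    (hc : HasDerivAt c c' z) (hd : HasDerivAt d d' z) :
    HasDerivAt (fun w ↦ !![a w, b w; c w, d w]) !![a', b'; c', d'] z := by
  refine hasDerivAt_pi.2 fun i ↦ hasDerivAt_pi.2 fun j ↦ ?_
  fin_cases i <;> fin_cases j
  exacts [ha, hb, hc, hd]

theorem hasDerivAt_inv_pow (n : ℕ) (hz : z ≠ 0) :
    HasDerivAt (fun w ↦ (w ^ n)⁻¹) (-n / (z ^ n * z)) z := by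
  refine ((hasDerivAt_pow n z).inv (pow_ne_zero n hz)).congr_deriv ?_
  have hzn : z ^ n ≠ 0 := pow_ne_zero n hz
  rw [div_eq_div_iff (pow_ne_zero 2 hzn) (mul_ne_zero hzn hz)]
  linear_combination -z ^ n * natCast_mul_pow_sub_one_mul n z

theorem mul_deriv_det_eq_of_det_eventuallyEq_pow (k : ℕ) (ha : HasDerivAt a a' z)
    (hb : HasDerivAt b b' z) (hc : HasDerivAt c c' z) (hd : HasDerivAt d d' z)
    (hdet : ∀ᶠ w in 𝓝 z, a w * d w - b w * c w = w ^ k) :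
    z * (a z * d' + a' * d z - b z * c' - b' * c z) = k * z ^ k := by
  have hD : HasDerivAt (fun w ↦ w ^ k) (a z * d' + a' * d z - (b z * c' + b' * c z)) z :=
    (((ha.fun_mul hd).fun_sub (hb.fun_mul hc)).congr_of_eventuallyEq
      (hdet.mono fun _ ↦ Eq.symm)).congr_deriv (by ring)
  rw [← natCast_mul_pow_sub_one_mul, ← hD.unique (hasDerivAt_pow k z)]
  ring

theorem deriv_det_eq_of_det_deriv_inv_pow_smul_eq_zero (n : ℕ) (hz : z ≠ 0)
    (ha : HasDerivAt a a' z) (hb : HasDerivAt b b' z) (hc : HasDerivAt c c' z)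
    (hd : HasDerivAt d d' z) (hdet : ∀ᶠ w in 𝓝 z, a w * d w - b w * c w = w ^ (2 * n))
    (hnull : (deriv (fun w ↦ (w ^ n)⁻¹ • !![a w, b w; c w, d w]) z).det = 0) :
    a' * d' - b' * c' = n ^ 2 * z ^ (2 * n - 2) := by
  have hzn : z ^ n ≠ 0 := pow_ne_zero n hz
  have hD' := mul_deriv_det_eq_of_det_eventuallyEq_pow (2 * n) ha hb hc hd hdet
  have hF : deriv (fun w ↦ (w ^ n)⁻¹ • !![a w, b w; c w, d w]) z = _ :=
    ((hasDerivAt_inv_pow n hz).fun_smul (ha.matrix_fin_two hb hc hd)).deriv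
  rw [hF, det_fin_two_smul_add_smul, hdet.self_of_nhds] at hnull
  field_simp at hnull
  have hsq : z ^ 2 * (a' * d' - b' * c') = n ^ 2 * z ^ (2 * n) := by
    push_cast at hD'
    linear_combination hnull + n * hD'
  refine mul_left_cancel₀ (pow_ne_zero 2 hz) (hsq.trans ?_)
  rcases n.eq_zero_or_pos with rfl | hn
  · simp
  · rw [mul_left_comm, ← pow_add, Nat.add_sub_cancel' (by omega)]

end Deriv

theorem null_condition_derivative_identity_general
    (n : ℕ)
    (a b c d : ℂ → ℂ)
    (ha : DifferentiableOn ℂ a Disc) (hb : DifferentiableOn ℂ b Disc)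
    (hc : DifferentiableOn ℂ c Disc) (hd : DifferentiableOn ℂ d Disc)
    (hdet : ∀ z ∈ Disc, a z * d z - b z * c z = z ^ (2 * n))
    (F : ℂ → Matrix (Fin 2) (Fin 2) ℂ)
    (hF : ∀ z, F z = (z ^ n)⁻¹ • !![a z, b z; c z, d z])
    (hnull : ∀ z ∈ PDisc, (deriv F z).det = 0) :
    ∀ z ∈ Disc,
      deriv a z * deriv d z - deriv b z * deriv c z = (n : ℂ) ^ 2 * z ^ (2 * n - 2) := by
  have hDisc : IsOpen Disc := isOpen_ball
  obtain rfl : F = fun w ↦ (w ^ n)⁻¹ • !![a w, b w; c w, d w] := funext hF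
  have hderiv {f : ℂ → ℂ} (hf : DifferentiableOn ℂ f Disc) {z : ℂ} (hz : z ∈ Disc) :
      HasDerivAt f (deriv f z) z :=
    (hf.differentiableAt (hDisc.mem_nhds hz)).hasDerivAt
  have hpunct : ∀ z ∈ PDisc,
      deriv a z * deriv d z - deriv b z * deriv c z = (n : ℂ) ^ 2 * z ^ (2 * n - 2) :=
    fun z hz ↦ deriv_det_eq_of_det_deriv_inv_pow_smul_eq_zero n hz.2 (hderiv ha hz.1)
      (hderiv hb hz.1) (hderiv hc hz.1) (hderiv hd hz.1)
      (eventually_of_mem (hDisc.mem_nhds hz.1) hdet) (hnull z hz)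
  intro z hz
  rcases eq_or_ne z 0 with rfl | hz0
  · have hcont {f : ℂ → ℂ} (hf : DifferentiableOn ℂ f Disc) : ContinuousAt (deriv f) 0 :=
      ((hf.analyticOnNhd hDisc).deriv 0 hz).continuousAt
    refine ContinuousAt.eq_of_eventuallyEq_nhdsNE
      (((hcont ha).mul (hcont hd)).sub ((hcont hb).mul (hcont hc)))
      (continuous_const.mul (continuous_pow _)).continuousAt ?_
    filter_upwards [self_mem_nhdsWithin, nhdsWithin_le_nhds (hDisc.mem_nhds hz)] with w hw0 hw
    exact hpunct w ⟨hw, hw0⟩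
  · exact hpunct z ⟨hz, hz0⟩

theorem null_condition_derivative_identity
    (n : ℕ) (hn : 1 ≤ n)
    (a b c d : ℂ → ℂ)
    (ha : DifferentiableOn ℂ a Disc) (hb : DifferentiableOn ℂ b Disc)
    (hc : DifferentiableOn ℂ c Disc) (hd : DifferentiableOn ℂ d Disc)
    (hdet : ∀ z ∈ Disc, a z * d z - b z * c z = z ^ (2 * n))
    (F : ℂ → Matrix (Fin 2) (Fin 2) ℂ)
    (hF : ∀ z, F z = (z ^ n)⁻¹ • !![a z, b z; c z, d z])
    (hnull : ∀ z ∈ PDisc, (deriv F z).det = 0) :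
    ∀ z ∈ Disc,
      deriv a z * deriv d z - deriv b z * deriv c z = (n : ℂ) ^ 2 * z ^ (2 * n - 2) :=
  null_condition_derivative_identity_general n a b c d ha hb hc hd hdet F hF hnull
end

section
/- Fix an integer n ≥ 1 and holomorphic functions a,b,c,d : Δ → ℂ with a(0) = a'(0) = b(0) = c(0) = 0, d(0) ≠ 0, and a(z)d(z) − b(z)c(z) = z^(2n) for all z ∈ Δ; set F(z) = z^(−n)·(a(z), b(z); c(z), d(z)) on Δ*. If F is null, i.e. det F'(z) = 0 for all z ∈ Δ*, then the vanishing orders at 0 satisfy ord₀(b) + ord₀(c) = 2n (in particular b and c are not identically zero) and, if a is not identically zero, ord₀(a) ≥ 2n. -/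
/-!
Write `M = (a, b; c, d)`, so that `F = z⁻ⁿ M` and `F' = z⁻ⁿ⁻¹ (z M' - n M)` for `z ≠ 0`.
Expanding `det (z M' - n M)` with `det M = z²ⁿ` and `z (det M)' = 2n z²ⁿ` turns the null condition
into `z² det M' = n² z²ⁿ`, so `ord₀ (ad - bc) = 2n` and `ord₀ (a'd' - b'c') = 2n - 2`.
Since `d(0) ≠ 0` and `b(0) = c(0) = 0`, differentiation lowers `ord₀ (ad)` by at most one and
`ord₀ (bc)` by exactly two. Compare `ord₀ (ad)` with `ord₀ (bc)`: if it were smaller, it would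
equal `2n` and `a'd' - b'c'` would vanish to order `2n - 1`; if the two are equal, the second
identity forces their common value to be `2n`; if it is larger, the first one gives
`ord₀ (bc) = 2n`.
-/

attribute [local instance] Matrix.normedAddCommGroup Matrix.normedSpace

open Metric Matrix

open Filter Topology

section NormedSpace

variable {𝕜 E : Type*} [NontriviallyNormedField 𝕜] [NormedAddCommGroup E] [NormedSpace 𝕜 E]
  {f g : 𝕜 → E} {z₀ : 𝕜}

theorem analyticOrderAt_sub_of_ne (hfg : analyticOrderAt f z₀ ≠ analyticOrderAt g z₀) :
    analyticOrderAt (f - g) z₀ = min (analyticOrderAt f z₀) (analyticOrderAt g z₀) := by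
  rw [sub_eq_add_neg, analyticOrderAt_add_of_ne] <;> simp [hfg]

theorem AnalyticAt.analyticOrderAt_le_deriv_add_one [CharZero 𝕜] [CompleteSpace E]
    (hf : AnalyticAt 𝕜 f z₀) : analyticOrderAt f z₀ ≤ analyticOrderAt (deriv f) z₀ + 1 := by
  by_cases h : f z₀ = 0
  · simpa [h] using hf.analyticOrderAt_deriv_add_one.ge
  · simp [analyticOrderAt_eq_zero.2 (Or.inr h)]

theorem AnalyticAt.analyticOrderAt_deriv_add_one_of_eq_zero [CharZero 𝕜] [CompleteSpace E]
    (hf : AnalyticAt 𝕜 f z₀) (h : f z₀ = 0) :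
    analyticOrderAt (deriv f) z₀ + 1 = analyticOrderAt f z₀ := by
  simpa [h] using hf.analyticOrderAt_deriv_add_one

theorem analyticOrderAt_eq_and_le_of_sub_of_sub {f g f' g' : 𝕜 → E} {k : ℕ}
    (hf : analyticOrderAt f z₀ ≤ analyticOrderAt f' z₀ + 1)
    (hg : analyticOrderAt g' z₀ + 2 = analyticOrderAt g z₀)
    (hfg : analyticOrderAt (f - g) z₀ = k + 2) (hfg' : analyticOrderAt (f' - g') z₀ = k) :
    analyticOrderAt g z₀ = k + 2 ∧ k + 2 ≤ analyticOrderAt f z₀ := by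
  rcases lt_trichotomy (analyticOrderAt f z₀) (analyticOrderAt g z₀) with hlt | heq | hgt
  · rw [analyticOrderAt_sub_of_ne hlt.ne, min_eq_left hlt.le] at hfg
    rw [hfg, ← hg] at hlt
    rw [hfg] at hf
    have hk : (k : ℕ∞) < min (analyticOrderAt f' z₀) (analyticOrderAt g' z₀) := by
      generalize analyticOrderAt f' z₀ = P' at *
      generalize analyticOrderAt g' z₀ = Q' at *
      clear * - hlt hf
      cases P' <;> cases Q' <;> norm_cast at * <;> simp_all
    exact absurd (hfg' ▸ le_analyticOrderAt_sub) hk.not_ge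
  · have hle := le_analyticOrderAt_sub (f := f) (g := g) (z₀ := z₀)
    rw [hfg, ← heq, min_self, heq, ← hg] at hle
    rw [heq, ← hg] at hf
    have hlt : analyticOrderAt g' z₀ < analyticOrderAt f' z₀ := by
      generalize analyticOrderAt f' z₀ = P' at *
      generalize analyticOrderAt g' z₀ = Q' at *
      clear * - hle hf
      cases P' <;> cases Q' <;> norm_cast at * <;> simp_all
    rw [analyticOrderAt_sub_of_ne hlt.ne', min_eq_right hlt.le] at hfg'
    rw [heq, ← hg, hfg']
    exact ⟨rfl, le_rfl⟩
  · rw [analyticOrderAt_sub_of_ne hgt.ne', min_eq_right hgt.le] at hfg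
    exact ⟨hfg, hfg ▸ hgt.le⟩

theorem HasDerivAt.inv_pow_smul {M : 𝕜 → E} {M' : E} {z : 𝕜} (n : ℕ) (hM : HasDerivAt M M' z)
    (hz : z ≠ 0) :
    HasDerivAt (fun w => (w ^ n)⁻¹ • M w) ((z ^ (n + 1))⁻¹ • (z • M' - (n : 𝕜) • M z)) z := by
  have hpow : HasDerivAt (fun w : 𝕜 => (w ^ n)⁻¹) (-n * (z ^ (n + 1))⁻¹) z := by
    convert hasDerivAt_zpow (-n : ℤ) z (Or.inl hz) using 1
    · simp [_root_.zpow_neg]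
    · rw [← neg_add', _root_.zpow_neg, ← Nat.cast_add_one, zpow_natCast, Int.cast_neg,
        Int.cast_natCast, neg_mul]
  refine (hpow.smul hM).congr_deriv ?_
  rw [smul_sub, smul_smul, smul_smul, pow_succ, mul_inv, inv_mul_cancel_right₀ hz]
  module

end NormedSpace

theorem sq_mul_det_eq_of_det_smul_sub_smul_eq_zero {R : Type*} [CommRing R]
    {s t a b c d a' b' c' d' : R}
    (hEuler : s * (a' * d + a * d' - (b' * c + b * c')) = 2 * t * (a * d - b * c))
    (h : (s • !![a', b'; c', d'] - t • !![a, b; c, d]).det = 0) :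
    s ^ 2 * (a' * d' - b' * c') = t ^ 2 * (a * d - b * c) := by
  simp only [det_fin_two, Matrix.sub_apply, Matrix.smul_apply, of_apply, cons_val', cons_val_zero,
    cons_val_one, cons_val_fin_one, smul_eq_mul] at h
  linear_combination h + t * hEuler

section Field

variable {𝕜 : Type*} [NontriviallyNormedField 𝕜] {a b c d : 𝕜 → 𝕜}

theorem analyticOrderAt_const_mul_pow {C : 𝕜} (hC : C ≠ 0) (k : ℕ) :
    analyticOrderAt (fun z => C * z ^ k) 0 = k :=
  (analyticAt_const.mul (analyticAt_id.pow k)).analyticOrderAt_eq_natCast.2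
    ⟨fun _ => C, analyticAt_const, hC, by simp [mul_comm]⟩

theorem analyticOrderAt_pow_self (k : ℕ) : analyticOrderAt (fun z : 𝕜 => z ^ k) 0 = k := by
  simpa using analyticOrderAt_const_mul_pow (one_ne_zero (α := 𝕜)) k

theorem analyticOrderAt_add_two_eq_of_sq_mul_eventuallyEq {f : 𝕜 → 𝕜} (hf : AnalyticAt 𝕜 f 0)
    {C : 𝕜} (hC : C ≠ 0) {k : ℕ} (h : (fun z => z ^ 2) * f =ᶠ[𝓝 0] fun z => C * z ^ k) :
    analyticOrderAt f 0 + 2 = k := by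
  rw [add_comm, ← analyticOrderAt_const_mul_pow hC, ← analyticOrderAt_congr h,
    analyticOrderAt_mul (f := fun z => z ^ 2) (analyticAt_id.pow 2) hf, analyticOrderAt_pow_self]
  rfl

theorem hasDerivAt_matrix_fin_two {a' b' c' d' z : 𝕜} (ha : HasDerivAt a a' z)
    (hb : HasDerivAt b b' z) (hc : HasDerivAt c c' z) (hd : HasDerivAt d d' z) :
    HasDerivAt (fun w => !![a w, b w; c w, d w]) !![a', b'; c', d'] z := by
  refine hasDerivAt_pi.2 fun i => hasDerivAt_pi.2 fun j => ?_
  fin_cases i <;> fin_cases j <;> simpa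

theorem mul_deriv_det_eq_of_det_eq_pow {n : ℕ} {z : 𝕜}
    (ha : DifferentiableAt 𝕜 a z) (hb : DifferentiableAt 𝕜 b z) (hc : DifferentiableAt 𝕜 c z)
    (hd : DifferentiableAt 𝕜 d z) (hdet : ∀ᶠ w in 𝓝 z, a w * d w - b w * c w = w ^ n) :
    z * (deriv a z * d z + a z * deriv d z - (deriv b z * c z + b z * deriv c z)) =
      n * (a z * d z - b z * c z) := by
  have h := ((ha.hasDerivAt.mul hd.hasDerivAt).sub
    (hb.hasDerivAt.mul hc.hasDerivAt)).congr_of_eventuallyEq (hdet.mono fun w hw => hw.symm)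
  rw [h.unique (hasDerivAt_pow n z), hdet.self_of_nhds]
  rcases n.eq_zero_or_pos with rfl | hn
  · simp
  · rw [← mul_pow_sub_one hn.ne' z]
    ring

theorem sq_mul_det_deriv_eq_of_det_deriv_inv_pow_smul_eq_zero {n : ℕ} {z : 𝕜} (hz : z ≠ 0)
    (ha : DifferentiableAt 𝕜 a z) (hb : DifferentiableAt 𝕜 b z) (hc : DifferentiableAt 𝕜 c z)
    (hd : DifferentiableAt 𝕜 d z) (hdet : ∀ᶠ w in 𝓝 z, a w * d w - b w * c w = w ^ (2 * n))
    (hnull : (deriv (fun w => (w ^ n)⁻¹ • !![a w, b w; c w, d w]) z).det = 0) :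
    z ^ 2 * (deriv a z * deriv d z - deriv b z * deriv c z) = n ^ 2 * z ^ (2 * n) := by
  have hF := (hasDerivAt_matrix_fin_two ha.hasDerivAt hb.hasDerivAt hc.hasDerivAt
    hd.hasDerivAt).inv_pow_smul n hz
  replace hnull := (congrArg Matrix.det hF.deriv).symm.trans hnull
  rw [det_smul] at hnull
  have hEuler := mul_deriv_det_eq_of_det_eq_pow ha hb hc hd hdet
  rw [Nat.cast_mul, Nat.cast_two] at hEuler
  rw [sq_mul_det_eq_of_det_smul_sub_smul_eq_zero hEuler
    ((mul_eq_zero.1 hnull).resolve_left (by simp [hz])), hdet.self_of_nhds]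

theorem analyticOrderAt_add_eq_of_det_of_det_deriv [CharZero 𝕜] [CompleteSpace 𝕜] {z₀ : 𝕜}
    (ha : AnalyticAt 𝕜 a z₀) (hb : AnalyticAt 𝕜 b z₀) (hc : AnalyticAt 𝕜 c z₀)
    (hd : AnalyticAt 𝕜 d z₀) (hb0 : b z₀ = 0) (hc0 : c z₀ = 0) (hd0 : d z₀ ≠ 0) {N : ℕ}
    (hdet : analyticOrderAt (a * d - b * c) z₀ = N)
    (hdet' : analyticOrderAt (deriv a * deriv d - deriv b * deriv c) z₀ + 2 = N) :
    analyticOrderAt b z₀ + analyticOrderAt c z₀ = N ∧ N ≤ analyticOrderAt a z₀ := by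
  obtain ⟨k, hk⟩ := ENat.ne_top_iff_exists.1 (fun h => by simp [h] at hdet' :
    analyticOrderAt (deriv a * deriv d - deriv b * deriv c) z₀ ≠ ⊤)
  rw [← hk] at hdet'
  norm_cast at hdet'
  subst hdet'
  push_cast at hdet ⊢
  have had : analyticOrderAt (a * d) z₀ = analyticOrderAt a z₀ := by
    rw [analyticOrderAt_mul ha hd, hd.analyticOrderAt_eq_zero.2 hd0, add_zero]
  have had' : analyticOrderAt (a * d) z₀ ≤ analyticOrderAt (deriv a * deriv d) z₀ + 1 := by
    rw [had, analyticOrderAt_mul ha.deriv hd.deriv]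
    exact ha.analyticOrderAt_le_deriv_add_one.trans (by gcongr; exact le_self_add)
  have hbc' : analyticOrderAt (deriv b * deriv c) z₀ + 2 = analyticOrderAt (b * c) z₀ := by
    rw [analyticOrderAt_mul hb.deriv hc.deriv, analyticOrderAt_mul hb hc,
      ← hb.analyticOrderAt_deriv_add_one_of_eq_zero hb0,
      ← hc.analyticOrderAt_deriv_add_one_of_eq_zero hc0]
    ring
  rw [← analyticOrderAt_mul hb hc, ← had]
  exact analyticOrderAt_eq_and_le_of_sub_of_sub had' hbc' hdet hk.symm

end Field

theorem vanishing_orders_normal_form_general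
    (n : ℕ) (hn : 1 ≤ n)
    (a b c d : ℂ → ℂ)
    (ha : DifferentiableOn ℂ a Disc) (hb : DifferentiableOn ℂ b Disc)
    (hc : DifferentiableOn ℂ c Disc) (hd : DifferentiableOn ℂ d Disc)
    (hb0 : b 0 = 0) (hc0 : c 0 = 0)
    (hd0 : d 0 ≠ 0)
    (hdet : ∀ z ∈ Disc, a z * d z - b z * c z = z ^ (2 * n))
    (F : ℂ → Matrix (Fin 2) (Fin 2) ℂ)
    (hF : ∀ z, F z = (z ^ n)⁻¹ • !![a z, b z; c z, d z])
    (hnull : ∀ z ∈ PDisc, (deriv F z).det = 0) :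
    ∀ (hbA : AnalyticAt ℂ b 0) (hcA : AnalyticAt ℂ c 0) (haA : AnalyticAt ℂ a 0),
      analyticOrderAt b 0 ≠ ⊤ ∧ analyticOrderAt c 0 ≠ ⊤ ∧
      analyticOrderAt b 0 + analyticOrderAt c 0 = ((2 * n : ℕ) : ℕ∞) ∧
      (analyticOrderAt a 0 ≠ ⊤ → ((2 * n : ℕ) : ℕ∞) ≤ analyticOrderAt a 0) := by
  intro hbA hcA haA
  have hDisc : ∀ z ∈ Disc, Disc ∈ 𝓝 z := fun _ => isOpen_ball.mem_nhds
  have h0 : (0 : ℂ) ∈ Disc := mem_ball_self one_pos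
  have hdA : AnalyticAt ℂ d 0 := hd.analyticAt (hDisc 0 h0)
  have hdet₀ : analyticOrderAt (a * d - b * c) 0 = (2 * n : ℕ) :=
    (analyticOrderAt_congr (eventually_of_mem (hDisc 0 h0) hdet)).trans (analyticOrderAt_pow_self _)
  have hdet₁ : analyticOrderAt (deriv a * deriv d - deriv b * deriv c) 0 + 2 = (2 * n : ℕ) := by
    refine analyticOrderAt_add_two_eq_of_sq_mul_eventuallyEq
      ((haA.deriv.mul hdA.deriv).sub (hbA.deriv.mul hcA.deriv))
      (pow_ne_zero 2 (Nat.cast_ne_zero.2 (by omega) : (n : ℂ) ≠ 0)) ?_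
    filter_upwards [hDisc 0 h0] with z hz
    rcases eq_or_ne z 0 with rfl | hz0
    · simp [show n ≠ 0 by omega]
    exact sq_mul_det_deriv_eq_of_det_deriv_inv_pow_smul_eq_zero hz0
      (ha.differentiableAt (hDisc z hz)) (hb.differentiableAt (hDisc z hz))
      (hc.differentiableAt (hDisc z hz)) (hd.differentiableAt (hDisc z hz))
      (eventually_of_mem (hDisc z hz) hdet) (funext hF ▸ hnull z ⟨hz, hz0⟩)
  obtain ⟨hsum, hle⟩ :=
    analyticOrderAt_add_eq_of_det_of_det_deriv haA hbA hcA hdA hb0 hc0 hd0 hdet₀ hdet₁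
  have hfin := WithTop.add_ne_top.1 (hsum ▸ ENat.natCast_ne_top (2 * n))
  exact ⟨hfin.1, hfin.2, hsum, fun _ => hle⟩

theorem vanishing_orders_normal_form
    (n : ℕ) (hn : 1 ≤ n)
    (a b c d : ℂ → ℂ)
    (ha : DifferentiableOn ℂ a Disc) (hb : DifferentiableOn ℂ b Disc)
    (hc : DifferentiableOn ℂ c Disc) (hd : DifferentiableOn ℂ d Disc)
    (ha0 : a 0 = 0) (ha'0 : deriv a 0 = 0) (hb0 : b 0 = 0) (hc0 : c 0 = 0)
    (hd0 : d 0 ≠ 0)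
    (hdet : ∀ z ∈ Disc, a z * d z - b z * c z = z ^ (2 * n))
    (F : ℂ → Matrix (Fin 2) (Fin 2) ℂ)
    (hF : ∀ z, F z = (z ^ n)⁻¹ • !![a z, b z; c z, d z])
    (hnull : ∀ z ∈ PDisc, (deriv F z).det = 0) :
    ∀ (hbA : AnalyticAt ℂ b 0) (hcA : AnalyticAt ℂ c 0) (haA : AnalyticAt ℂ a 0),
      analyticOrderAt b 0 ≠ ⊤ ∧ analyticOrderAt c 0 ≠ ⊤ ∧
      analyticOrderAt b 0 + analyticOrderAt c 0 = ((2 * n : ℕ) : ℕ∞) ∧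
      (analyticOrderAt a 0 ≠ ⊤ → ((2 * n : ℕ) : ℕ∞) ≤ analyticOrderAt a 0) :=
  vanishing_orders_normal_form_general n hn a b c d ha hb hc hd hb0 hc0 hd0 hdet F hF hnull
end

section
/- Fix an integer n ≥ 1 and holomorphic functions a,b,c,d : Δ → ℂ with a(0) = a'(0) = b(0) = c(0) = 0, d(0) ≠ 0, and a(z)d(z) − b(z)c(z) = z^(2n) for all z ∈ Δ; assume det F'(z) = 0 for all z ∈ Δ*, where F(z) = z^(−n)·(a(z), b(z); c(z), d(z)). Define f : Δ → ℝ³ by f(z) = (Re w(z), Im w(z), x₃(z)), where for z ∈ Δ*: w(z) = (a(z)·conj(c(z)) + b(z)·conj(d(z)))/(|c(z)|² + |d(z)|²) and x₃(z) = |z|^(2n)/(|c(z)|² + |d(z)|²), and f(0) = (0,0,0). Then f is a smooth (C^∞) map on a neighborhood of 0, and the differential of f at 0 is injective if and only if b'(0) ≠ 0. -/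
/-!
STATEMENT 7: The half-space Bryant representation map `f` extends smoothly
through the puncture, and its differential at `0` is injective iff `b'(0) ≠ 0`.
-/

attribute [local instance] Matrix.normedAddCommGroup Matrix.normedSpace

open Metric Matrix Complex

theorem smooth_end_criterion
    (n : ℕ) (hn : 1 ≤ n)
    (a b c d : ℂ → ℂ)
    (ha : DifferentiableOn ℂ a Disc) (hb : DifferentiableOn ℂ b Disc)
    (hc : DifferentiableOn ℂ c Disc) (hd : DifferentiableOn ℂ d Disc)
    (ha0 : a 0 = 0) (ha'0 : deriv a 0 = 0) (hb0 : b 0 = 0) (hc0 : c 0 = 0)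
    (hd0 : d 0 ≠ 0)
    (hdet : ∀ z ∈ Disc, a z * d z - b z * c z = z ^ (2 * n))
    (F : ℂ → Matrix (Fin 2) (Fin 2) ℂ)
    (hF : ∀ z, F z = (z ^ n)⁻¹ • !![a z, b z; c z, d z])
    (hnull : ∀ z ∈ PDisc, (deriv F z).det = 0)
    (w : ℂ → ℂ)
    (hw : ∀ z, w z = (a z * (starRingEnd ℂ) (c z) + b z * (starRingEnd ℂ) (d z)) /
      ((‖c z‖ ^ 2 + ‖d z‖ ^ 2 : ℝ) : ℂ))
    (x₃ : ℂ → ℝ)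
    (hx₃ : ∀ z, x₃ z = ‖z‖ ^ (2 * n) /
      (‖c z‖ ^ 2 + ‖d z‖ ^ 2))
    (f : ℂ → (Fin 3 → ℝ))
    (hf : ∀ z, z ≠ 0 → f z = ![(w z).re, (w z).im, x₃ z])
    (hf0 : f 0 = ![0, 0, 0]) :
    (∃ ε > 0, ContDiffOn ℝ (⊤ : ℕ∞) f (Metric.ball (0 : ℂ) ε)) ∧
    (Function.Injective (fderiv ℝ f 0) ↔ deriv b 0 ≠ 0) := by
  have hopen : IsOpen Disc := Metric.isOpen_ball
  have h0D : (0:ℂ) ∈ Disc := by simp [Disc]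
  have h2n : 2 * n ≠ 0 := by omega
  have hw0 : w 0 = 0 := by simp [hw 0, ha0, hb0]
  have hx30 : x₃ 0 = 0 := by simp [hx₃ 0, zero_pow h2n]
  have hfg : f = fun z => ![(w z).re, (w z).im, x₃ z] := by
    funext z
    by_cases hz : z = 0
    · subst hz; rw [hf0, hw0, hx30]; norm_num
    · exact hf z hz
  have hmem : Disc ∈ nhds (0:ℂ) := hopen.mem_nhds h0D
  have hda : DifferentiableAt ℂ a 0 := ha.differentiableAt hmem
  have hdb : DifferentiableAt ℂ b 0 := hb.differentiableAt hmem
  have hdc : DifferentiableAt ℂ c 0 := hc.differentiableAt hmem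
  have hdd : DifferentiableAt ℂ d 0 := hd.differentiableAt hmem
  set DA : ℂ → ℝ := fun z => ‖c z‖^2 + ‖d z‖^2 with hDAdef
  have hDA0 : DA 0 = ‖d 0‖^2 := by simp [hDAdef, hc0]
  have hDA0ne : DA 0 ≠ 0 := by
    rw [hDA0]
    simpa using hd0
  have hDAc : ContinuousAt DA 0 := by
    exact ((continuous_norm.continuousAt.comp hdc.continuousAt).pow 2).add
      ((continuous_norm.continuousAt.comp hdd.continuousAt).pow 2)
  obtain ⟨ε₁, hε₁, hball⟩ := Metric.eventually_nhds_iff_ball.mp (hDAc.eventually_ne hDA0ne)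
  set ε := min ε₁ 1 with hεdef
  have hεpos : 0 < ε := lt_min hε₁ one_pos
  set S := Metric.ball (0:ℂ) ε with hSdef
  have hSD : S ⊆ Disc := Metric.ball_subset_ball (min_le_right _ _)
  have hSne : ∀ z ∈ S, DA z ≠ 0 := fun z hz =>
    hball z (Metric.ball_subset_ball (min_le_left _ _) hz)
  have h0S : (0:ℂ) ∈ S := Metric.mem_ball_self hεpos
  -- smoothness building blocks
  have haS : ContDiffOn ℝ (⊤ : ℕ∞) a S := ((ha.mono hSD).contDiffOn Metric.isOpen_ball).restrict_scalars ℝ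
  have hbS : ContDiffOn ℝ (⊤ : ℕ∞) b S := ((hb.mono hSD).contDiffOn Metric.isOpen_ball).restrict_scalars ℝ
  have hcS : ContDiffOn ℝ (⊤ : ℕ∞) c S := ((hc.mono hSD).contDiffOn Metric.isOpen_ball).restrict_scalars ℝ
  have hdS : ContDiffOn ℝ (⊤ : ℕ∞) d S := ((hd.mono hSD).contDiffOn Metric.isOpen_ball).restrict_scalars ℝ
  have hconj : ContDiff ℝ (⊤ : ℕ∞) (starRingEnd ℂ : ℂ → ℂ) := Complex.conjCLE.contDiff
  have hNS : ContDiffOn ℝ (⊤ : ℕ∞)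
      (fun z => a z * (starRingEnd ℂ) (c z) + b z * (starRingEnd ℂ) (d z)) S :=
    (haS.mul (hconj.comp_contDiffOn hcS)).add (hbS.mul (hconj.comp_contDiffOn hdS))
  have habs2 : ∀ (u : ℂ → ℂ), ContDiffOn ℝ (⊤ : ℕ∞) u S →
      ContDiffOn ℝ (⊤ : ℕ∞) (fun z => ‖u z‖^2) S := by
    intro u hu
    have h1 : (fun z => ‖u z‖^2) = fun z => ‖u z‖^2 := by
      rfl
    rw [h1]
    exact (contDiff_norm_sq (𝕜 := ℂ)).comp_contDiffOn hu
  have hDAS : ContDiffOn ℝ (⊤ : ℕ∞) DA S := (habs2 c hcS).add (habs2 d hdS)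
  have hDAcS : ContDiffOn ℝ (⊤ : ℕ∞) (fun z => ((DA z : ℝ) : ℂ)) S :=
    Complex.ofRealCLM.contDiff.comp_contDiffOn hDAS
  have hwfun : w = fun z => (a z * (starRingEnd ℂ) (c z) + b z * (starRingEnd ℂ) (d z)) *
      (((DA z : ℝ) : ℂ))⁻¹ := by
    funext z; rw [hw z, div_eq_mul_inv]
  have hwS : ContDiffOn ℝ (⊤ : ℕ∞) w S := by
    rw [hwfun]
    refine hNS.mul (hDAcS.inv ?_)
    intro z hz
    exact_mod_cast Complex.ofReal_ne_zero.mpr (hSne z hz)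
  have hx3fun : x₃ = fun z => (‖z‖^2)^n / DA z := by
    funext z
    rw [hx₃ z, ← pow_mul]
  have hx3S : ContDiffOn ℝ (⊤ : ℕ∞) x₃ S := by
    rw [hx3fun]
    exact ContDiffOn.div (((contDiff_norm_sq (𝕜 := ℂ)).pow n).contDiffOn) hDAS hSne
  -- the derivative candidate
  set lam : ℂ := deriv b 0 / d 0 with hlamdef
  set mulL : ℂ →L[ℝ] ℂ := (ContinuousLinearMap.mul ℝ ℂ) lam with hmulLdef
  set L : ℂ →L[ℝ] (Fin 3 → ℝ) := ContinuousLinearMap.pi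
    (fun i => ![Complex.reCLM.comp mulL, Complex.imCLM.comp mulL, (0 : ℂ →L[ℝ] ℝ)] i) with hLdef
  -- HasFDerivAt of w at 0
  have hA : HasFDerivAt a
      ((ContinuousLinearMap.smulRight (1:ℂ→L[ℂ]ℂ) (deriv a 0)).restrictScalars ℝ) 0 :=
    (hda.hasDerivAt.hasFDerivAt).restrictScalars ℝ
  have hB : HasFDerivAt b
      ((ContinuousLinearMap.smulRight (1:ℂ→L[ℂ]ℂ) (deriv b 0)).restrictScalars ℝ) 0 :=
    (hdb.hasDerivAt.hasFDerivAt).restrictScalars ℝ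
  have hC : HasFDerivAt c
      ((ContinuousLinearMap.smulRight (1:ℂ→L[ℂ]ℂ) (deriv c 0)).restrictScalars ℝ) 0 :=
    (hdc.hasDerivAt.hasFDerivAt).restrictScalars ℝ
  have hD : HasFDerivAt d
      ((ContinuousLinearMap.smulRight (1:ℂ→L[ℂ]ℂ) (deriv d 0)).restrictScalars ℝ) 0 :=
    (hdd.hasDerivAt.hasFDerivAt).restrictScalars ℝ
  have hCj : HasFDerivAt (fun z => (starRingEnd ℂ) (c z))
      (((Complex.conjCLE : ℂ →L[ℝ] ℂ) : ℂ →L[ℝ] ℂ).comp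
        ((ContinuousLinearMap.smulRight (1:ℂ→L[ℂ]ℂ) (deriv c 0)).restrictScalars ℝ)) 0 :=
    ((Complex.conjCLE : ℂ →L[ℝ] ℂ).hasFDerivAt).comp 0 hC
  have hDj : HasFDerivAt (fun z => (starRingEnd ℂ) (d z))
      (((Complex.conjCLE : ℂ →L[ℝ] ℂ) : ℂ →L[ℝ] ℂ).comp
        ((ContinuousLinearMap.smulRight (1:ℂ→L[ℂ]ℂ) (deriv d 0)).restrictScalars ℝ)) 0 :=
    ((Complex.conjCLE : ℂ →L[ℝ] ℂ).hasFDerivAt).comp 0 hD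
  have hDAcdiff : DifferentiableAt ℝ (fun z => ((DA z : ℝ) : ℂ)) 0 :=
    (hDAcS.differentiableOn (by simp)).differentiableAt (Metric.isOpen_ball.mem_nhds h0S)
  have hDAc0ne : ((DA 0 : ℝ) : ℂ) ≠ 0 := Complex.ofReal_ne_zero.mpr hDA0ne
  have hInvDiff : DifferentiableAt ℝ (fun z : ℂ => (((DA z : ℝ) : ℂ))⁻¹) 0 := by
    exact DifferentiableAt.comp 0 (differentiableAt_inv hDAc0ne) hDAcdiff
  have hInv := hInvDiff.hasFDerivAt
  have hkey : ((DA 0 : ℝ) : ℂ) = d 0 * (starRingEnd ℂ) (d 0) := by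
    rw [hDA0, ← Complex.normSq_eq_norm_sq, Complex.mul_conj]
  have hcjne : (starRingEnd ℂ) (d 0) ≠ 0 := by
    simpa using hd0
  have hwF : HasFDerivAt w mulL 0 := by
    rw [hwfun]
    have h1 := ((hA.mul hCj).add (hB.mul hDj)).mul hInv
    refine h1.congr_fderiv (Eq.symm ?_)
    ext h
    simp only [ContinuousLinearMap.add_apply, ContinuousLinearMap.smul_apply,
      ContinuousLinearMap.comp_apply, ContinuousLinearMap.smulRight_apply,
      ContinuousLinearMap.one_apply,
      ContinuousLinearMap.coe_restrictScalars', hmulLdef, ContinuousLinearMap.mul_apply',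
      ha0, hb0, hc0, ha'0, map_zero, smul_eq_mul, zero_mul, mul_zero, add_zero, zero_add,
      zero_smul, smul_zero, Pi.add_apply, Pi.mul_apply]
    rw [hkey]
    field_simp [hlamdef, hd0, hcjne]
    rw [hlamdef, div_mul_eq_mul_div, div_mul_cancel₀ _ hd0, mul_comm]
  -- HasFDerivAt of x₃ at 0
  have hre0 : HasFDerivAt (fun z : ℂ => z.re) (Complex.reCLM : ℂ →L[ℝ] ℝ) 0 :=
    Complex.reCLM.hasFDerivAt
  have him0 : HasFDerivAt (fun z : ℂ => z.im) (Complex.imCLM : ℂ →L[ℝ] ℝ) 0 :=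
    Complex.imCLM.hasFDerivAt
  have hq : HasFDerivAt (fun z : ℂ => ‖z‖^2) (0 : ℂ →L[ℝ] ℝ) 0 := by
    have h1 := (hre0.mul hre0).add (him0.mul him0)
    have h2 : (fun z : ℂ => ‖z‖^2) = fun z : ℂ => z.re * z.re + z.im * z.im := by
      funext z; rw [Complex.sq_norm, Complex.normSq_apply]
    rw [h2]
    refine h1.congr_fderiv (Eq.symm ?_)
    ext h
    simp
  have hpow : ∀ m : ℕ, HasFDerivAt (fun z : ℂ => (‖z‖^2)^(m+1)) (0 : ℂ →L[ℝ] ℝ) 0 := by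
    intro m
    induction m with
    | zero => simpa using hq
    | succ k ih =>
      have h1 := hq.mul ih
      have h2 : (fun z : ℂ => (‖z‖^2)^(k+1+1)) = fun z : ℂ => ‖z‖^2 * (‖z‖^2)^(k+1) := by
        funext z; ring
      rw [h2]
      refine h1.congr_fderiv (Eq.symm ?_)
      ext h
      simp
  have hDAdiff : DifferentiableAt ℝ DA 0 :=
    (hDAS.differentiableOn (by simp)).differentiableAt (Metric.isOpen_ball.mem_nhds h0S)
  have hInvRDiff : DifferentiableAt ℝ (fun z : ℂ => (DA z)⁻¹) 0 := by
    exact DifferentiableAt.comp 0 (differentiableAt_inv hDA0ne) hDAdiff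
  have hInvR := hInvRDiff.hasFDerivAt
  have hx3F : HasFDerivAt x₃ (0 : ℂ →L[ℝ] ℝ) 0 := by
    have h2 : x₃ = fun z => (‖z‖^2)^((n-1)+1) * (DA z)⁻¹ := by
      rw [hx3fun]
      funext z
      rw [Nat.sub_add_cancel hn, div_eq_mul_inv]
    rw [h2]
    have h1 := (hpow (n-1)).mul hInvR
    refine h1.congr_fderiv (Eq.symm ?_)
    ext h
    simp
  -- HasFDerivAt of f
  have hfF : HasFDerivAt f L 0 := by
    rw [hfg]
    apply hasFDerivAt_pi''
    intro i
    fin_cases i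
    · have := (Complex.reCLM.hasFDerivAt (x := w 0)).comp 0 hwF
      exact this.congr_fderiv (ContinuousLinearMap.ext fun h => rfl)
    · have := (Complex.imCLM.hasFDerivAt (x := w 0)).comp 0 hwF
      exact this.congr_fderiv (ContinuousLinearMap.ext fun h => rfl)
    · exact hx3F.congr_fderiv (ContinuousLinearMap.ext fun h => rfl)
  constructor
  · refine ⟨ε, hεpos, ?_⟩
    rw [hfg, contDiffOn_pi]
    intro i
    fin_cases i
    · exact Complex.reCLM.contDiff.comp_contDiffOn hwS
    · exact Complex.imCLM.contDiff.comp_contDiffOn hwS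
    · simpa using hx3S
  · rw [hfF.fderiv]
    constructor
    · intro hinj hb'
      have hlam0 : lam = 0 := by rw [hlamdef, hb', zero_div]
      have : (1:ℂ) = 0 := by
        apply hinj
        have hL1 : L 1 = L 0 := by
          ext i
          fin_cases i <;>
            simp [hLdef, hmulLdef, hlam0, ContinuousLinearMap.pi_apply]
        simpa using hL1
      exact one_ne_zero this
    · intro hb'
      have hlamne : lam ≠ 0 := div_ne_zero hb' hd0
      rw [injective_iff_map_eq_zero]
      intro h hh
      have h1 : (L h) 0 = 0 := by rw [hh]; rfl
      have h2 : (L h) 1 = 0 := by rw [hh]; rfl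
      simp only [hLdef, ContinuousLinearMap.pi_apply, ContinuousLinearMap.comp_apply,
        hmulLdef, ContinuousLinearMap.mul_apply'] at h1 h2
      have hml : lam * h = 0 := by
        apply Complex.ext
        · simpa using h1
        · simpa using h2
      rcases mul_eq_zero.mp hml with h3 | h3
      · exact absurd h3 hlamne
      · exact h3
end

section
/- Let F = (a, b; c, d) ∈ SL(2,ℂ), define x₀, x₁, x₂, x₃ ∈ ℝ by F·conj(F)ᵗ = (x₀+x₃, x₁+i·x₂; x₁−i·x₂, x₀−x₃), and let f = (x₁, x₂, x₃)/(x₀+1) ∈ ℝ³. Let φ : ℝ³ \ {(0,0,1)} → ℝ³ be the map φ(y₁,y₂,y₃) = 2·(y₁, y₂, 1−y₃)/|(y₁, y₂, 1−y₃)|² − (0,0,1). Then f ≠ (0,0,1) and φ(f) = (Re u, Im u, v), where u = (a·conj(c) + b·conj(d))/(|c|² + |d|²) and v = 1/(|c|² + |d|²). -/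
/-!
Since `det (F Fᴴ) = |det F|² = 1`, the point `x` lies on the hyperboloid `x₀² - |x|² = 1`, and
`F Fᴴ` also reads off `|c|² + |d|² = x₀ - x₃` and `a c̄ + b d̄ = x₁ + i x₂`. The point `f` is the
image of `x` in the ball under projection from `(-1, 0, 0, 0)`; on the hyperboloid
`|f - e₃|² = 2 (x₀ - x₃) / (x₀ + 1)`, which collapses `φ f` to `(x₁, x₂, 1) / (x₀ - x₃)`.
-/

open Matrix Complex ComplexConjugate

noncomputable section

def hyperboloidToBall (x₀ x₁ x₂ x₃ : ℝ) : Fin 3 → ℝ := fun i => ![x₁, x₂, x₃] i / (x₀ + 1)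

def ballToHalfSpace (y : Fin 3 → ℝ) : Fin 3 → ℝ :=
  (2 / (y 0 ^ 2 + y 1 ^ 2 + (1 - y 2) ^ 2)) • ![y 0, y 1, 1 - y 2] - ![0, 0, 1]

def minkowskiHermitian (x₀ x₁ x₂ x₃ : ℝ) : Matrix (Fin 2) (Fin 2) ℂ :=
  !![(x₀ : ℂ) + (x₃ : ℂ), (x₁ : ℂ) + (x₂ : ℂ) * I; (x₁ : ℂ) - (x₂ : ℂ) * I, (x₀ : ℂ) - (x₃ : ℂ)]

end

section Hyperboloid

variable {x₀ x₁ x₂ x₃ : ℝ}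

lemma pos_of_hyperboloid (hx : x₀ ^ 2 - x₁ ^ 2 - x₂ ^ 2 - x₃ ^ 2 = 1) (h : x₃ < x₀) : 0 < x₀ := by
  nlinarith [sq_nonneg x₁, sq_nonneg x₂]

lemma hyperboloidToBall_ne_northPole (h : x₃ < x₀) (h₀ : x₀ + 1 ≠ 0) :
    hyperboloidToBall x₀ x₁ x₂ x₃ ≠ ![0, 0, 1] := by
  intro hN
  have h2 : x₃ / (x₀ + 1) = 1 := congrFun hN 2
  rw [div_eq_one_iff_eq h₀] at h2
  linarith

lemma sq_dist_northPole_hyperboloidToBall (hx : x₀ ^ 2 - x₁ ^ 2 - x₂ ^ 2 - x₃ ^ 2 = 1)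
    (h₀ : x₀ + 1 ≠ 0) :
    let y := hyperboloidToBall x₀ x₁ x₂ x₃
    y 0 ^ 2 + y 1 ^ 2 + (1 - y 2) ^ 2 = 2 * (x₀ - x₃) / (x₀ + 1) := by
  simp only [hyperboloidToBall, Matrix.cons_val]
  field_simp
  linear_combination -hx

lemma ballToHalfSpace_hyperboloidToBall (hx : x₀ ^ 2 - x₁ ^ 2 - x₂ ^ 2 - x₃ ^ 2 = 1)
    (h₀ : x₀ + 1 ≠ 0) (h : x₀ - x₃ ≠ 0) :
    ballToHalfSpace (hyperboloidToBall x₀ x₁ x₂ x₃) =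
      ![x₁ / (x₀ - x₃), x₂ / (x₀ - x₃), 1 / (x₀ - x₃)] := by
  rw [ballToHalfSpace, sq_dist_northPole_hyperboloidToBall hx h₀]
  ext i
  fin_cases i <;> simp [hyperboloidToBall] <;> field_simp; ring

end Hyperboloid

lemma det_minkowskiHermitian (x₀ x₁ x₂ x₃ : ℝ) :
    (minkowskiHermitian x₀ x₁ x₂ x₃).det = ((x₀ ^ 2 - x₁ ^ 2 - x₂ ^ 2 - x₃ ^ 2 : ℝ) : ℂ) := by
  rw [minkowskiHermitian, det_fin_two_of]
  push_cast
  linear_combination (x₂ : ℂ) ^ 2 * I_sq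

lemma mul_conjTranspose_fin_two (a b c d : ℂ) :
    !![a, b; c, d] * (!![a, b; c, d])ᴴ =
      !![((‖a‖ ^ 2 + ‖b‖ ^ 2 : ℝ) : ℂ), a * conj c + b * conj d;
         c * conj a + d * conj b, ((‖c‖ ^ 2 + ‖d‖ ^ 2 : ℝ) : ℂ)] := by
  ext i j
  fin_cases i <;> fin_cases j <;> simp [Matrix.mul_apply, mul_conj, Complex.sq_norm]

lemma hyperboloid_of_mul_conjTranspose {A : Matrix (Fin 2) (Fin 2) ℂ} {x₀ x₁ x₂ x₃ : ℝ}
    (hA : A.det = 1) (h : A * Aᴴ = minkowskiHermitian x₀ x₁ x₂ x₃) :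
    x₀ ^ 2 - x₁ ^ 2 - x₂ ^ 2 - x₃ ^ 2 = 1 := by
  have := congrArg Matrix.det h
  rw [det_mul, det_conjTranspose, hA, star_one, mul_one, det_minkowskiHermitian] at this
  exact_mod_cast this.symm

lemma sq_norm_add_sq_norm_pos_of_det_eq_one {a b c d : ℂ} (hdet : a * d - b * c = 1) :
    0 < ‖c‖ ^ 2 + ‖d‖ ^ 2 := by
  by_contra! h
  have hc : c = 0 := by rw [← norm_eq_zero]; nlinarith [norm_nonneg c, norm_nonneg d]
  have hd : d = 0 := by rw [← norm_eq_zero]; nlinarith [norm_nonneg c, norm_nonneg d]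
  simp [hc, hd] at hdet

theorem ball_to_halfspace_formula
    (a b c d : ℂ) (hdet : a * d - b * c = 1)
    (x₀ x₁ x₂ x₃ : ℝ)
    (hHerm : (!![a, b; c, d] : Matrix (Fin 2) (Fin 2) ℂ) * (!![a, b; c, d]).conjTranspose =
      !![(x₀ : ℂ) + (x₃ : ℂ), (x₁ : ℂ) + (x₂ : ℂ) * Complex.I;
         (x₁ : ℂ) - (x₂ : ℂ) * Complex.I, (x₀ : ℂ) - (x₃ : ℂ)])
    (f : Fin 3 → ℝ)
    (hf : f = fun i => (![x₁, x₂, x₃] : Fin 3 → ℝ) i / (x₀ + 1))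
    (φ : (Fin 3 → ℝ) → (Fin 3 → ℝ))
    (hφ : ∀ y : Fin 3 → ℝ,
      φ y = (2 / ((y 0) ^ 2 + (y 1) ^ 2 + (1 - y 2) ^ 2)) • ![y 0, y 1, 1 - y 2] - ![0, 0, 1])
    (u : ℂ)
    (hu : u = (a * (starRingEnd ℂ) c + b * (starRingEnd ℂ) d) /
      ((‖c‖ ^ 2 + ‖d‖ ^ 2 : ℝ) : ℂ))
    (v : ℝ)
    (hv : v = 1 / (‖c‖ ^ 2 + ‖d‖ ^ 2)) :
    f ≠ ![0, 0, 1] ∧ φ f = ![u.re, u.im, v] := by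
  have hx : x₀ ^ 2 - x₁ ^ 2 - x₂ ^ 2 - x₃ ^ 2 = 1 :=
    hyperboloid_of_mul_conjTranspose (by rwa [det_fin_two_of]) hHerm
  rw [mul_conjTranspose_fin_two] at hHerm
  have hcross : a * conj c + b * conj d = x₁ + x₂ * I := by
    simpa using congrFun (congrFun hHerm 0) 1
  have hn : ‖c‖ ^ 2 + ‖d‖ ^ 2 = x₀ - x₃ := by
    exact_mod_cast (by simpa using congrFun (congrFun hHerm 1) 1 :
      ((‖c‖ ^ 2 + ‖d‖ ^ 2 : ℝ) : ℂ) = x₀ - x₃)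
  have hx₃ : x₃ < x₀ := by linarith [sq_norm_add_sq_norm_pos_of_det_eq_one hdet]
  have hx₀ : 0 < x₀ := pos_of_hyperboloid hx hx₃
  obtain rfl : f = hyperboloidToBall x₀ x₁ x₂ x₃ := hf
  subst u v
  refine ⟨hyperboloidToBall_ne_northPole hx₃ (by linarith), ?_⟩
  rw [show φ = ballToHalfSpace from funext hφ,
    ballToHalfSpace_hyperboloidToBall hx (by linarith) (by linarith), hn, hcross,
    Complex.div_ofReal_re, Complex.div_ofReal_im]
  simp
end

section
/- Fix an integer n ≥ 1 and holomorphic functions a,b,c,d : Δ → ℂ with a(0) = a'(0) = b(0) = c(0) = 0, d(0) ≠ 0, and a(z)d(z) − b(z)c(z) = z^(2n) for all z ∈ Δ; assume det F'(z) = 0 for all z ∈ Δ* where F(z) = z^(−n)·(a(z), b(z); c(z), d(z)), and assume b'(0) ≠ 0 (so the corresponding Bryant surface has a smooth end at 0). Define, on a neighborhood of 0 in Δ, the holomorphic function G(z) = (z·b'(z) − n·b(z)) / (z·d'(z) − n·d(z)) (the denominator is nonzero at 0 since it equals −n·d(0) there). Then G(0) = 0, and G'(0) ≠ 0 if and only if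 n ≥ 2. That is, the hyperbolic Gauss map of the Bryant surface is immersed at a smooth end if and only if the end is catenoidal (pole order n > 1) rather than horospherical (n = 1). -/
/-!
Both `N(z) = z·b'(z) − n·b(z)` and `D(z) = z·d'(z) − n·d(z)` are holomorphic near `0`, with
`N(0) = −n·b(0) = 0` and `D(0) = −n·d(0) ≠ 0`. Since `N(0) = 0`, the quotient rule gives
`G'(0) = N'(0) / D(0)`, and `N'(0) = b'(0) + 0·b''(0) − n·b'(0) = (1 − n)·b'(0)`.
As `b'(0) ≠ 0`, this vanishes exactly when `n = 1`.
-/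

attribute [local instance] Matrix.normedAddCommGroup Matrix.normedSpace

open Metric Matrix

open Topology

theorem AnalyticAt.hasDerivAt_id_mul_deriv_sub_const_mul {𝕜 : Type*} [NontriviallyNormedField 𝕜]
    [CompleteSpace 𝕜] {f : 𝕜 → 𝕜} (hf : AnalyticAt 𝕜 f 0) (k : 𝕜) :
    HasDerivAt (fun z => z * deriv f z - k * f z) ((1 - k) * deriv f 0) 0 := by
  refine (((hasDerivAt_id' 0).mul hf.deriv.differentiableAt.hasDerivAt).sub
    (hf.differentiableAt.hasDerivAt.const_mul k)).congr_deriv ?_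
  ring

theorem HasDerivAt.div_of_eq_zero {𝕜 : Type*} [NontriviallyNormedField 𝕜] {N D : 𝕜 → 𝕜}
    {N' D' x : 𝕜} (hN : HasDerivAt N N' x) (hD : HasDerivAt D D' x) (hNx : N x = 0)
    (hDx : D x ≠ 0) : HasDerivAt (fun z => N z / D z) (N' / D x) x := by
  refine (hN.div hD hDx).congr_deriv ?_
  rw [hNx, zero_mul, sub_zero, sq, mul_div_mul_right _ _ hDx]

theorem gauss_map_immersed_iff_catenoidal_general
    (n : ℕ) (hn : 1 ≤ n)
    (b d : ℂ → ℂ)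
    (hb : DifferentiableOn ℂ b Disc)
    (hd : DifferentiableOn ℂ d Disc)
    (hb0 : b 0 = 0)
    (hd0 : d 0 ≠ 0)
    (hb' : deriv b 0 ≠ 0)
    (G : ℂ → ℂ)
    (hG : ∀ z, G z = (z * deriv b z - n * b z) / (z * deriv d z - n * d z)) :
    G 0 = 0 ∧ (deriv G 0 ≠ 0 ↔ 2 ≤ n) := by
  have hDisc : Disc ∈ 𝓝 (0 : ℂ) := ball_mem_nhds (0 : ℂ) one_pos
  have hD0 : (0 : ℂ) * deriv d 0 - n * d 0 ≠ 0 := by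
    simpa using mul_ne_zero (Nat.cast_ne_zero.mpr (by omega)) hd0
  have hG' : HasDerivAt G ((1 - n) * deriv b 0 / (0 * deriv d 0 - n * d 0)) 0 := by
    rw [funext hG]
    exact ((hb.analyticAt hDisc).hasDerivAt_id_mul_deriv_sub_const_mul n).div_of_eq_zero
      ((hd.analyticAt hDisc).hasDerivAt_id_mul_deriv_sub_const_mul n) (by simp [hb0]) hD0
  refine ⟨by simp [hG, hb0], ?_⟩
  rw [hG'.deriv, div_ne_zero_iff, mul_ne_zero_iff, sub_ne_zero, ne_comm, Ne, Nat.cast_eq_one]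
  simp only [ne_eq, hb', hD0, not_false_eq_true, and_true]
  omega

theorem gauss_map_immersed_iff_catenoidal
    (n : ℕ) (hn : 1 ≤ n)
    (a b c d : ℂ → ℂ)
    (ha : DifferentiableOn ℂ a Disc) (hb : DifferentiableOn ℂ b Disc)
    (hc : DifferentiableOn ℂ c Disc) (hd : DifferentiableOn ℂ d Disc)
    (ha0 : a 0 = 0) (ha'0 : deriv a 0 = 0) (hb0 : b 0 = 0) (hc0 : c 0 = 0)
    (hd0 : d 0 ≠ 0)
    (hdet : ∀ z ∈ Disc, a z * d z - b z * c z = z ^ (2 * n))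
    (F : ℂ → Matrix (Fin 2) (Fin 2) ℂ)
    (hF : ∀ z, F z = (z ^ n)⁻¹ • !![a z, b z; c z, d z])
    (hnull : ∀ z ∈ PDisc, (deriv F z).det = 0)
    (hb' : deriv b 0 ≠ 0)
    (G : ℂ → ℂ)
    (hG : ∀ z, G z = (z * deriv b z - n * b z) / (z * deriv d z - n * d z)) :
    G 0 = 0 ∧ (deriv G 0 ≠ 0 ↔ 2 ≤ n) :=
  gauss_map_immersed_iff_catenoidal_general n hn b d hb hd hb0 hd0 hb' G hG
end
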